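/- arXiv:0712.1344 — 3 statements merged into one kernel-verified Lean document; each statement's English description precedes it below -/
import Mathlib

section
/- For the Curie-Weiss partition function Z_N(β) = Σ_σ exp((βN/2) m(σ)²), for every β ≥ 0 and N ≥ 1: (1/N) ln Z_N(β) ≤ (1/N) ln(N+1) + sup_{M ∈ [-1,1]} { ln 2 + ln cosh(βM) - (β/2) M² }. -/
/-!
Group the configurations by their magnetization, which takes at most `N + 1` values, all in
`[-1, 1]`. On the fibre `m(σ) = M` the energy is linear in the spins:
`βN/2 · m(σ)² = -βN/2 · M² + βM · Σᵢ σᵢ`. Extending the sum of the linear weight from the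
fibre to all configurations factorizes it into `(2 cosh βM)^N`, so each fibre contributes at
most `exp (N · (log 2 + log cosh βM - βM²/2))`.
-/

open Real Finset

noncomputable def spin (b : Bool) : ℝ := if b then 1 else -1

noncomputable def mag (N : ℕ) (σ : Fin N → Bool) : ℝ :=
  (1 / (N : ℝ)) * ∑ i : Fin N, spin (σ i)

noncomputable def Zcw (N : ℕ) (β : ℝ) : ℝ :=
  ∑ σ : Fin N → Bool, Real.exp (β * N / 2 * (mag N σ) ^ 2)

noncomputable def cwPressureFunctional (β M : ℝ) : ℝ :=
  log 2 + log (cosh (β * M)) - β / 2 * M ^ 2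

lemma continuous_cwPressureFunctional (β : ℝ) : Continuous (cwPressureFunctional β) := by
  unfold cwPressureFunctional
  fun_prop (disch := exact fun _ => (cosh_pos _).ne')

lemma bddAbove_range_cwPressureFunctional (β : ℝ) :
    BddAbove (Set.range fun M : Set.Icc (-1 : ℝ) 1 => cwPressureFunctional β M) :=
  (isCompact_range ((continuous_cwPressureFunctional β).comp continuous_subtype_val)).bddAbove

lemma sum_exp_mul_sum_spin {ι : Type*} [Fintype ι] [DecidableEq ι] (c : ℝ) :
    ∑ σ : ι → Bool, exp (c * ∑ i, spin (σ i)) = (2 * cosh c) ^ Fintype.card ι := by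
  have hsite : ∑ b : Bool, exp (c * spin b) = 2 * cosh c := by
    simp [spin, cosh_eq]
    ring
  simp_rw [mul_sum, exp_sum]
  rw [← Fintype.prod_sum (fun _ b => exp (c * spin b)), hsite, prod_const, card_univ]

lemma natCast_mul_mag (N : ℕ) (σ : Fin N → Bool) : N * mag N σ = ∑ i, spin (σ i) := by
  rcases N.eq_zero_or_pos with rfl | hN
  · simp
  · rw [mag, ← mul_assoc, mul_one_div_cancel (by positivity), one_mul]

lemma mag_eq_div (N : ℕ) (σ : Fin N → Bool) :
    mag N σ = (2 * #{i | σ i = true} - N) / N := by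
  have hspin : ∀ b : Bool, spin b = 2 * (if b = true then 1 else 0) - 1 := by
    intro b; cases b <;> norm_num [spin]
  simp_rw [mag, hspin, sum_sub_distrib, ← mul_sum, sum_boole]
  simp [div_eq_inv_mul]

lemma abs_mag_le_one (N : ℕ) (σ : Fin N → Bool) : |mag N σ| ≤ 1 := by
  have hsum : |∑ i, spin (σ i)| ≤ N := by
    refine (abs_sum_le_sum_abs _ _).trans ?_
    have : ∀ b, |spin b| = 1 := by intro b; cases b <;> simp [spin]
    simp [this]
  rw [mag, abs_mul, one_div, abs_inv, Nat.abs_cast, ← div_eq_inv_mul]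
  exact (div_le_div_of_nonneg_right hsum (Nat.cast_nonneg N)).trans (div_self_le_one _)

lemma card_image_mag_le (N : ℕ) : #(univ.image (mag N)) ≤ N + 1 := by
  have hsub : univ.image (mag N) ⊆
      (range (N + 1)).image fun k : ℕ => (2 * k - N : ℝ) / N := by
    intro M hM
    obtain ⟨σ, -, rfl⟩ := mem_image.1 hM
    refine mem_image.2 ⟨#{i | σ i = true}, ?_, (mag_eq_div N σ).symm⟩
    exact mem_range.2 (Nat.lt_succ_of_le ((card_filter_le _ _).trans_eq (card_fin N)))
  exact (card_le_card hsub).trans (card_image_le.trans_eq (card_range _))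

lemma sum_exp_mag_sq_fiber_le (N : ℕ) (β M : ℝ) :
    ∑ σ : Fin N → Bool with mag N σ = M, exp (β * N / 2 * mag N σ ^ 2) ≤
      exp (N * cwPressureFunctional β M) := by
  have hlinear : ∀ σ ∈ ({σ | mag N σ = M} : Finset (Fin N → Bool)),
      exp (β * N / 2 * mag N σ ^ 2) =
        exp (-(β * N / 2 * M ^ 2)) * exp (β * M * ∑ i, spin (σ i)) := by
    intro σ hσ
    rw [(mem_filter.1 hσ).2.symm, ← natCast_mul_mag, ← exp_add]
    congr 1
    ring
  calc ∑ σ : Fin N → Bool with mag N σ = M, exp (β * N / 2 * mag N σ ^ 2)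
      = exp (-(β * N / 2 * M ^ 2)) *
          ∑ σ : Fin N → Bool with mag N σ = M, exp (β * M * ∑ i, spin (σ i)) := by
        rw [sum_congr rfl hlinear, mul_sum]
    _ ≤ exp (-(β * N / 2 * M ^ 2)) * ∑ σ : Fin N → Bool, exp (β * M * ∑ i, spin (σ i)) := by
        gcongr
        exact subset_univ _
    _ = exp (N * cwPressureFunctional β M) := by
        rw [sum_exp_mul_sum_spin, Fintype.card_fin, cwPressureFunctional,
          ← log_mul two_ne_zero (cosh_pos _).ne',
          show (N : ℝ) * (log (2 * cosh (β * M)) - β / 2 * M ^ 2) =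
            N * log (2 * cosh (β * M)) + -(β * N / 2 * M ^ 2) by ring,
          exp_add, exp_nat_mul, exp_log (by positivity)]
        ring

lemma Zcw_le (N : ℕ) (β S : ℝ) (hS : ∀ M ∈ Set.Icc (-1 : ℝ) 1, cwPressureFunctional β M ≤ S) :
    Zcw N β ≤ (N + 1) * exp (N * S) := by
  have hfibre : ∀ M ∈ univ.image (mag N),
      ∑ σ : Fin N → Bool with mag N σ = M, exp (β * N / 2 * mag N σ ^ 2) ≤ exp (N * S) := by
    intro M hM
    obtain ⟨σ, -, rfl⟩ := mem_image.1 hM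
    refine (sum_exp_mag_sq_fiber_le N β _).trans (exp_le_exp.2 ?_)
    exact mul_le_mul_of_nonneg_left (hS _ (abs_le.1 (abs_mag_le_one N σ))) (Nat.cast_nonneg N)
  calc Zcw N β
      = ∑ M ∈ univ.image (mag N),
          ∑ σ : Fin N → Bool with mag N σ = M, exp (β * N / 2 * mag N σ ^ 2) :=
        (sum_fiberwise_of_maps_to (fun σ _ => mem_image_of_mem _ (mem_univ σ)) _).symm
    _ ≤ #(univ.image (mag N)) * exp (N * S) := by
        simpa using sum_le_sum hfibre
    _ ≤ (N + 1) * exp (N * S) := by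
        gcongr
        exact_mod_cast card_image_mag_le N

lemma Zcw_pos (N : ℕ) (β : ℝ) : 0 < Zcw N β :=
  sum_pos (fun _ _ => exp_pos _) univ_nonempty

theorem pressure_upper_bound_general (N : ℕ) (hN : 1 ≤ N) (β : ℝ) :
    (1 / (N : ℝ)) * Real.log (Zcw N β) ≤
      (1 / (N : ℝ)) * Real.log (N + 1) +
        ⨆ M : Set.Icc (-1 : ℝ) 1,
          (Real.log 2 + Real.log (Real.cosh (β * (M : ℝ))) - (β / 2) * (M : ℝ) ^ 2) := by
  set S := ⨆ M : Set.Icc (-1 : ℝ) 1, cwPressureFunctional β M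
  have hS : ∀ M ∈ Set.Icc (-1 : ℝ) 1, cwPressureFunctional β M ≤ S := fun M hM =>
    le_ciSup (bddAbove_range_cwPressureFunctional β) ⟨M, hM⟩
  have hNpos : (0 : ℝ) < N := by exact_mod_cast hN
  calc (1 / (N : ℝ)) * log (Zcw N β)
      ≤ (1 / (N : ℝ)) * log ((N + 1) * exp (N * S)) := by
        gcongr
        exacts [Zcw_pos N β, Zcw_le N β S hS]
    _ = (1 / (N : ℝ)) * log (N + 1) + S := by
        rw [log_mul (by positivity) (exp_pos _).ne', log_exp]
        field_simp

theorem pressure_upper_bound (N : ℕ) (hN : 1 ≤ N) (β : ℝ) (hβ : 0 ≤ β) :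
    (1 / (N : ℝ)) * Real.log (Zcw N β) ≤
      (1 / (N : ℝ)) * Real.log (N + 1) +
        ⨆ M : Set.Icc (-1 : ℝ) 1,
          (Real.log 2 + Real.log (Real.cosh (β * (M : ℝ))) - (β / 2) * (M : ℝ) ^ 2) :=
  pressure_upper_bound_general N hN β
end

section
/- Define the interpolating partition function Z_N(t) = Σ_σ exp(β(Nt m(σ)² + N₁(1-t) m₁(σ)² + N₂(1-t) m₂(σ)²)) for t ∈ [0,1]. Then d/dt [(1/(Nβ)) ln Z_N(t)] = ⟨ m² − (N₁/N) m₁² − (N₂/N) m₂² ⟩_t ≤ 0, where ⟨·⟩_t is the Gibbs average with weight proportional to the summand. -/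
/-!
The weight is `exp (a σ + t * β * E σ)` with `E = N m² - N₁ m₁² - N₂ m₂²`, so the derivative of the
log-partition function is the Gibbs average of `β E`. Since `N m = N₁ m₁ + N₂ m₂`, the Cauchy–Schwarz
inequality `(N₁ m₁ + N₂ m₂)² ≤ (N₁ + N₂) (N₁ m₁² + N₂ m₂²)` makes `E` nonpositive pointwise.
-/

open Real

variable (N₁ N₂ : ℕ)

noncomputable def magTot (σ : Fin (N₁ + N₂) → Bool) : ℝ :=
  (1 / ((N₁ : ℝ) + N₂)) * ∑ i : Fin (N₁ + N₂), spin (σ i)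

noncomputable def mag₁ (σ : Fin (N₁ + N₂) → Bool) : ℝ :=
  (1 / (N₁ : ℝ)) * ∑ i : Fin (N₁ + N₂), if (i : ℕ) < N₁ then spin (σ i) else 0

noncomputable def mag₂ (σ : Fin (N₁ + N₂) → Bool) : ℝ :=
  (1 / (N₂ : ℝ)) * ∑ i : Fin (N₁ + N₂), if N₁ ≤ (i : ℕ) then spin (σ i) else 0

/-- Interpolating Boltzmann weight. -/
noncomputable def w (β t : ℝ) (σ : Fin (N₁ + N₂) → Bool) : ℝ :=
  Real.exp (β * (((N₁ : ℝ) + N₂) * t * (magTot N₁ N₂ σ) ^ 2 +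
    (N₁ : ℝ) * (1 - t) * (mag₁ N₁ N₂ σ) ^ 2 + (N₂ : ℝ) * (1 - t) * (mag₂ N₁ N₂ σ) ^ 2))

/-- Gibbs average with the interpolating weight. -/
noncomputable def gibbs (β t : ℝ) (F : (Fin (N₁ + N₂) → Bool) → ℝ) : ℝ :=
  (∑ σ : Fin (N₁ + N₂) → Bool, F σ * w N₁ N₂ β t σ) /
    (∑ σ : Fin (N₁ + N₂) → Bool, w N₁ N₂ β t σ)

theorem hasDerivAt_log_sum_exp {ι : Type*} [Fintype ι] [Nonempty ι] (a b : ι → ℝ) (t : ℝ) :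
    HasDerivAt (fun s => log (∑ i, exp (a i + s * b i)))
      ((∑ i, b i * exp (a i + t * b i)) / ∑ i, exp (a i + t * b i)) t := by
  have hexp (i : ι) :
      HasDerivAt (fun s => exp (a i + s * b i)) (b i * exp (a i + t * b i)) t := by
    simpa [mul_comm] using (((hasDerivAt_id t).mul_const (b i)).const_add (a i)).exp
  have hZ : 0 < ∑ i, exp (a i + t * b i) :=
    Finset.sum_pos (fun i _ => exp_pos _) Finset.univ_nonempty
  exact (HasDerivAt.fun_sum fun i _ => hexp i).log hZ.ne'

theorem mul_sq_le_of_mul_eq {a b m x y : ℝ} (ha : 0 ≤ a) (hb : 0 ≤ b)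
    (hm : (a + b) * m = a * x + b * y) : (a + b) * m ^ 2 ≤ a * x ^ 2 + b * y ^ 2 := by
  rcases (add_nonneg ha hb).eq_or_lt with hab | hab
  · nlinarith
  · refine le_of_mul_le_mul_left ?_ hab
    calc (a + b) * ((a + b) * m ^ 2) = (a * x + b * y) ^ 2 := by rw [← hm]; ring
      _ ≤ (a * x + b * y) ^ 2 + a * b * (x - y) ^ 2 := by
        have := mul_nonneg ha hb
        apply le_add_of_nonneg_right; positivity
      _ = (a + b) * (a * x ^ 2 + b * y ^ 2) := by ring

theorem natCast_mul_magTot (σ : Fin (N₁ + N₂) → Bool) :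
    ((N₁ : ℝ) + N₂) * magTot N₁ N₂ σ = ∑ i, spin (σ i) := by
  rcases Nat.eq_zero_or_pos (N₁ + N₂) with hN | hN
  · obtain ⟨rfl, rfl⟩ : N₁ = 0 ∧ N₂ = 0 := by omega
    simp
  · rw [magTot, ← mul_assoc, mul_one_div_cancel (by exact_mod_cast hN.ne'), one_mul]

theorem natCast_mul_mag₁ (σ : Fin (N₁ + N₂) → Bool) :
    (N₁ : ℝ) * mag₁ N₁ N₂ σ = ∑ i : Fin (N₁ + N₂), if (i : ℕ) < N₁ then spin (σ i) else 0 := by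
  rcases Nat.eq_zero_or_pos N₁ with rfl | hN
  · simp
  · rw [mag₁, ← mul_assoc, mul_one_div_cancel (by positivity), one_mul]

theorem natCast_mul_mag₂ (σ : Fin (N₁ + N₂) → Bool) :
    (N₂ : ℝ) * mag₂ N₁ N₂ σ = ∑ i : Fin (N₁ + N₂), if N₁ ≤ (i : ℕ) then spin (σ i) else 0 := by
  rcases Nat.eq_zero_or_pos N₂ with rfl | hN
  · rw [Nat.cast_zero, zero_mul]
    exact (Finset.sum_eq_zero fun i _ => if_neg (not_le.mpr i.is_lt)).symm
  · rw [mag₂, ← mul_assoc, mul_one_div_cancel (by positivity), one_mul]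

theorem natCast_mul_magTot_eq (σ : Fin (N₁ + N₂) → Bool) :
    ((N₁ : ℝ) + N₂) * magTot N₁ N₂ σ = N₁ * mag₁ N₁ N₂ σ + N₂ * mag₂ N₁ N₂ σ := by
  rw [natCast_mul_magTot, natCast_mul_mag₁, natCast_mul_mag₂, ← Finset.sum_add_distrib]
  refine Finset.sum_congr rfl fun i _ => ?_
  rcases lt_or_ge (i : ℕ) N₁ with h | h
  · simp [h, not_le.mpr h]
  · simp [h, not_lt.mpr h]

noncomputable def energyGap (σ : Fin (N₁ + N₂) → Bool) : ℝ :=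
  ((N₁ : ℝ) + N₂) * magTot N₁ N₂ σ ^ 2 - N₁ * mag₁ N₁ N₂ σ ^ 2 - N₂ * mag₂ N₁ N₂ σ ^ 2

theorem energyGap_nonpos (σ : Fin (N₁ + N₂) → Bool) : energyGap N₁ N₂ σ ≤ 0 := by
  have := mul_sq_le_of_mul_eq (Nat.cast_nonneg N₁) (Nat.cast_nonneg N₂)
    (natCast_mul_magTot_eq N₁ N₂ σ)
  rw [energyGap]
  linarith

theorem magTot_sq_sub_eq_energyGap_div (σ : Fin (N₁ + N₂) → Bool) :
    magTot N₁ N₂ σ ^ 2 - ((N₁ : ℝ) / ((N₁ : ℝ) + N₂)) * mag₁ N₁ N₂ σ ^ 2 -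
      ((N₂ : ℝ) / ((N₁ : ℝ) + N₂)) * mag₂ N₁ N₂ σ ^ 2 = energyGap N₁ N₂ σ / ((N₁ : ℝ) + N₂) := by
  rcases eq_or_ne ((N₁ : ℝ) + N₂) 0 with hN | hN
  · simp [energyGap, magTot, hN]
  · rw [energyGap]
    field_simp

theorem w_eq_exp (β s : ℝ) (σ : Fin (N₁ + N₂) → Bool) :
    w N₁ N₂ β s σ =
      exp (β * (N₁ * mag₁ N₁ N₂ σ ^ 2 + N₂ * mag₂ N₁ N₂ σ ^ 2) + s * (β * energyGap N₁ N₂ σ)) := by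
  rw [w, energyGap]
  ring_nf

theorem gibbs_nonpos {β t : ℝ} {F : (Fin (N₁ + N₂) → Bool) → ℝ} (hF : ∀ σ, F σ ≤ 0) :
    gibbs N₁ N₂ β t F ≤ 0 :=
  div_nonpos_of_nonpos_of_nonneg
    (Finset.sum_nonpos fun σ _ => mul_nonpos_of_nonpos_of_nonneg (hF σ) (exp_pos _).le)
    (Finset.sum_nonneg fun _ _ => (exp_pos _).le)

theorem gibbs_const_mul (β t c : ℝ) (F : (Fin (N₁ + N₂) → Bool) → ℝ) :
    gibbs N₁ N₂ β t (fun σ => c * F σ) = c * gibbs N₁ N₂ β t F := by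
  simp only [gibbs, mul_assoc, ← Finset.mul_sum, mul_div_assoc]

theorem interpolation_derivative (β : ℝ) (hβ : 0 < β)
    (t : ℝ) :
    HasDerivAt
      (fun s => (1 / (((N₁ : ℝ) + N₂) * β)) *
        Real.log (∑ σ : Fin (N₁ + N₂) → Bool, w N₁ N₂ β s σ))
      (gibbs N₁ N₂ β t (fun σ => (magTot N₁ N₂ σ) ^ 2 -
        ((N₁ : ℝ) / ((N₁ : ℝ) + N₂)) * (mag₁ N₁ N₂ σ) ^ 2 -
        ((N₂ : ℝ) / ((N₁ : ℝ) + N₂)) * (mag₂ N₁ N₂ σ) ^ 2)) t ∧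
    gibbs N₁ N₂ β t (fun σ => (magTot N₁ N₂ σ) ^ 2 -
        ((N₁ : ℝ) / ((N₁ : ℝ) + N₂)) * (mag₁ N₁ N₂ σ) ^ 2 -
        ((N₂ : ℝ) / ((N₁ : ℝ) + N₂)) * (mag₂ N₁ N₂ σ) ^ 2) ≤ 0 := by
  simp only [magTot_sq_sub_eq_energyGap_div]
  refine ⟨?_, gibbs_nonpos N₁ N₂ fun σ =>
    div_nonpos_of_nonpos_of_nonneg (energyGap_nonpos N₁ N₂ σ) (by positivity)⟩
  have hZ := (hasDerivAt_log_sum_exp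
    (fun σ => β * (N₁ * mag₁ N₁ N₂ σ ^ 2 + N₂ * mag₂ N₁ N₂ σ ^ 2))
    (fun σ => β * energyGap N₁ N₂ σ) t).const_mul (1 / (((N₁ : ℝ) + N₂) * β))
  simp only [← w_eq_exp] at hZ
  refine hZ.congr_deriv ?_
  calc 1 / (((N₁ : ℝ) + N₂) * β) * gibbs N₁ N₂ β t (fun σ => β * energyGap N₁ N₂ σ)
      = 1 / (((N₁ : ℝ) + N₂) * β) * (β * gibbs N₁ N₂ β t (energyGap N₁ N₂)) := by
        rw [gibbs_const_mul]
    _ = ((N₁ : ℝ) + N₂)⁻¹ * gibbs N₁ N₂ β t (energyGap N₁ N₂) := by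
        rw [one_div, mul_inv, mul_assoc, inv_mul_cancel_left₀ hβ.ne']
    _ = gibbs N₁ N₂ β t (fun σ => energyGap N₁ N₂ σ / ((N₁ : ℝ) + N₂)) := by
        simp only [div_eq_inv_mul, gibbs_const_mul]
end

section
/- The positive solution m(β) of m = tanh(βm) scales at criticality as m(β)² / (β−1) → 3 as β → 1⁺; in particular m(β) ~ √3 · (β−1)^{1/2}, so the critical exponent of the order parameter is 1/2. -/
/-!
With `t = β m(β)` the fixed-point equation reads `m = tanh t` and `t - tanh t = (β - 1) m`, so
`m² / (β - 1) = tanh³ t / (t - tanh t)`. Since `t ↦ t - tanh t` is strictly increasing on `[0, ∞)`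
and `(β - 1) m → 0`, we get `t → 0⁺`, and `tanh t = t - t³/3 + o(t³)` (L'Hôpital) gives the limit
`1 / (1/3) = 3`.
-/

open Real Filter Set Topology

theorem tendsto_nhds_of_strictMonoOn_comp {α β γ : Type*} [LinearOrder β] [TopologicalSpace β]
    [OrderTopology β] [LinearOrder γ] [TopologicalSpace γ] [OrderTopology γ]
    {l : Filter α} {g : β → γ} {u : α → β} {a : β} (hg : StrictMonoOn g (Ici a))
    (hu : ∀ᶠ x in l, a ≤ u x) (h : Tendsto (fun x => g (u x)) l (𝓝 (g a))) :
    Tendsto u l (𝓝 a) := by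
  refine tendsto_order.2 ⟨fun b hb => hu.mono fun x hx => hb.trans_le hx, fun b hb => ?_⟩
  filter_upwards [hu, (tendsto_order.1 h).2 _ (hg self_mem_Ici hb.le hb)] with x hax hx
  exact (hg.lt_iff_lt hax hb.le).1 hx

namespace Real

theorem hasDerivAt_tanh (x : ℝ) : HasDerivAt tanh (1 - tanh x ^ 2) x := by
  have h := (hasDerivAt_sinh x).div (hasDerivAt_cosh x) (cosh_pos x).ne'
  rw [show tanh = sinh / cosh from funext tanh_eq_sinh_div_cosh]
  refine h.congr_deriv ?_
  rw [Pi.div_apply]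
  field_simp

theorem continuous_tanh : Continuous tanh :=
  continuous_iff_continuousAt.2 fun x => (hasDerivAt_tanh x).continuousAt

theorem tanh_pos {x : ℝ} (hx : 0 < x) : 0 < tanh x := by
  rw [tanh_eq_sinh_div_cosh]
  exact div_pos (sinh_pos_iff.2 hx) (cosh_pos x)

theorem hasDerivAt_sub_tanh (x : ℝ) : HasDerivAt (fun t => t - tanh t) (tanh x ^ 2) x :=
  ((hasDerivAt_id' x).sub (hasDerivAt_tanh x)).congr_deriv (by ring)

theorem strictMonoOn_sub_tanh : StrictMonoOn (fun x => x - tanh x) (Ici 0) := by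
  refine strictMonoOn_of_deriv_pos (convex_Ici 0) (continuous_id.sub continuous_tanh).continuousOn
    fun x hx => ?_
  rw [interior_Ici] at hx
  rw [(hasDerivAt_sub_tanh x).deriv]
  exact pow_pos (tanh_pos hx) 2

theorem tendsto_tanh_div_self : Tendsto (fun x => tanh x / x) (𝓝[≠] 0) (𝓝 1) := by
  have h := hasDerivAt_iff_tendsto_slope_zero.1 (hasDerivAt_tanh 0)
  simpa [tanh_zero, div_eq_inv_mul] using h

theorem tendsto_sub_tanh_div_pow_three :
    Tendsto (fun x => (x - tanh x) / x ^ 3) (𝓝[≠] 0) (𝓝 (1 / 3)) := by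
  refine HasDerivAt.lhopital_zero_nhdsNE (f' := fun x => tanh x ^ 2) (g' := fun x => 3 * x ^ 2)
    (.of_forall hasDerivAt_sub_tanh) (.of_forall fun x => by simpa using hasDerivAt_pow 3 x)
    (eventually_nhdsWithin_of_forall fun x hx => by simpa using hx) ?_ ?_ ?_
  · have h : Tendsto (fun x => x - tanh x) (𝓝 0) (𝓝 (0 - tanh 0)) :=
      (continuous_id.sub continuous_tanh).tendsto 0
    simpa using h.mono_left nhdsWithin_le_nhds
  · have h : Tendsto (fun x : ℝ => x ^ 3) (𝓝 0) (𝓝 (0 ^ 3)) := (continuous_pow 3).tendsto 0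
    simpa using h.mono_left nhdsWithin_le_nhds
  · have h := (tendsto_tanh_div_self.pow 2).mul_const (1 / 3 : ℝ)
    rw [one_pow, one_mul] at h
    refine h.congr' (eventually_nhdsWithin_of_forall fun x (hx : x ≠ 0) => ?_)
    field_simp

theorem tendsto_tanh_pow_three_div_sub_tanh :
    Tendsto (fun x => tanh x ^ 3 / (x - tanh x)) (𝓝[≠] 0) (𝓝 3) := by
  have h := (tendsto_tanh_div_self.pow 3).div tendsto_sub_tanh_div_pow_three (by norm_num)
  rw [one_pow, one_div_one_div] at h
  refine h.congr' (eventually_nhdsWithin_of_forall fun x (hx : x ≠ 0) => ?_)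
  rw [Pi.div_apply, div_pow, div_div_div_cancel_right₀ (pow_ne_zero 3 hx)]

end Real

theorem sq_div_sub_one_eq_of_eq_tanh {β m : ℝ} (hβ : β ≠ 1) (hm0 : m ≠ 0)
    (hm : m = tanh (β * m)) :
    m ^ 2 / (β - 1) = tanh (β * m) ^ 3 / (β * m - tanh (β * m)) := by
  have hβ1 : β - 1 ≠ 0 := sub_ne_zero.2 hβ
  rw [← hm]
  field_simp

theorem critical_scaling (m : ℝ → ℝ)
    (hm : ∀ β : ℝ, 1 < β → m β ∈ Set.Ioo (0 : ℝ) 1 ∧ m β = Real.tanh (β * m β)) :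
    Filter.Tendsto (fun β => (m β) ^ 2 / (β - 1)) (nhdsWithin 1 (Set.Ioi 1)) (nhds 3) := by
  have near_one : ∀ᶠ β in 𝓝[>] (1 : ℝ), 1 < β := self_mem_nhdsWithin
  have ht_pos : ∀ᶠ β in 𝓝[>] (1 : ℝ), 0 < β * m β :=
    near_one.mono fun β hβ => mul_pos (by linarith) (hm β hβ).1.1
  have hgap : ∀ᶠ β in 𝓝[>] (1 : ℝ), (β - 1) * m β = β * m β - tanh (β * m β) :=
    near_one.mono fun β hβ => by rw [← (hm β hβ).2]; ring
  have hgap_lim : Tendsto (fun β => (β - 1) * m β) (𝓝[>] 1) (𝓝 0) :=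
    squeeze_zero' (near_one.mono fun β hβ => mul_nonneg (by linarith) (hm β hβ).1.1.le)
      (near_one.mono fun β hβ => mul_le_of_le_one_right (by linarith) (hm β hβ).1.2.le)
      (tendsto_sub_nhds_zero_iff.2 nhdsWithin_le_nhds)
  have ht_lim : Tendsto (fun β => β * m β) (𝓝[>] 1) (𝓝[≠] 0) :=
    tendsto_nhdsWithin_iff.2 ⟨tendsto_nhds_of_strictMonoOn_comp strictMonoOn_sub_tanh
      (ht_pos.mono fun _ h => h.le) (by simpa using hgap_lim.congr' hgap),
      ht_pos.mono fun _ h => h.ne'⟩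
  refine (tendsto_tanh_pow_three_div_sub_tanh.comp ht_lim).congr' ?_
  filter_upwards [near_one] with β hβ
  exact (sq_div_sub_one_eq_of_eq_tanh hβ.ne' (hm β hβ).1.1.ne' (hm β hβ).2).symm
end
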